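/- arXiv:2007.08520 — 2 statements merged into one kernel-verified Lean document; each statement's English description precedes it below -/
import Mathlib

section
/- Let f : (Fin n → ℝ) → (Fin m → ℝ), let x : Fin n → ℝ, let ε ≥ 0, and let j₀ be the original label of x. Let J' be a set of labels with j₀ ∉ J'. Suppose (a) for every label j ∈ J', f is j-robust with respect to x and ε, and (b) for every label j ∉ J' with j ≠ j₀ there exist reals U_j < L_j such that f(x')[j] ≤ U_j and L_j ≤ f(x')[j₀] for every x' with L∞(x,x') ≤ ε. Then f is robust with respect to x and ε. (Soundness of target-label-guided verification combined with label elimination by output-interval bounds.) -/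
/-- The L∞ distance between two vectors: `max_i |x[i] − x'[i]|`. -/
noncomputable def linf {n : ℕ} (x x' : Fin n → ℝ) : ℝ := ⨆ i, |x i - x' i|

theorem robust_of_verified_and_eliminated_general {n m : ℕ}
    (f : (Fin n → ℝ) → (Fin m → ℝ)) (x : Fin n → ℝ) (ε : ℝ)
    (j₀ : Fin m)
    (J' : Set (Fin m))
    (hverified : ∀ j ∈ J', ∀ x', linf x x' ≤ ε → f x' j < f x' j₀)
    (helim : ∀ j ∉ J', j ≠ j₀ →
      ∃ U L : ℝ, U < L ∧
        (∀ x', linf x x' ≤ ε → f x' j ≤ U) ∧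
        (∀ x', linf x x' ≤ ε → L ≤ f x' j₀)) :
    ∀ x', linf x x' ≤ ε → ∀ j, j ≠ j₀ → f x' j < f x' j₀ := by
  intro x' hx' j hj
  by_cases hJ : j ∈ J'
  · exact hverified j hJ x' hx'
  · obtain ⟨U, L, hUL, hU, hL⟩ := helim j hJ hj
    exact (hU x' hx').trans_lt (hUL.trans_le (hL x' hx'))

/-- Soundness of target-label-guided verification combined with label
elimination by output-interval bounds: if `f` is `j`-robust for every label
`j` in the set `J'` of verified target labels, and every remaining label
`j ∉ J'` with `j ≠ j₀` is eliminated by output-interval bounds `U_j < L_j`,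
then `f` is robust w.r.t. `x` and `ε`. -/
theorem robust_of_verified_and_eliminated {n m : ℕ}
    (f : (Fin n → ℝ) → (Fin m → ℝ)) (x : Fin n → ℝ) (ε : ℝ) (hε : 0 ≤ ε)
    (j₀ : Fin m) (horig : ∀ j, j ≠ j₀ → f x j < f x j₀)
    (J' : Set (Fin m)) (hj₀ : j₀ ∉ J')
    (hverified : ∀ j ∈ J', ∀ x', linf x x' ≤ ε → f x' j < f x' j₀)
    (helim : ∀ j ∉ J', j ≠ j₀ →
      ∃ U L : ℝ, U < L ∧
        (∀ x', linf x x' ≤ ε → f x' j ≤ U) ∧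
        (∀ x', linf x x' ≤ ε → L ≤ f x' j₀)) :
    ∀ x', linf x x' ≤ ε → ∀ j, j ≠ j₀ → f x' j < f x' j₀ :=
  robust_of_verified_and_eliminated_general f x ε j₀ J' hverified helim
end

section
/- Let l, u be real numbers with l < 0 < u, and let a be a real number with u/(u−l) ≤ a ≤ 1. Then for every x with l ≤ x ≤ u, the linear function a·(x − l) is an upper bound of the ReLU function: max 0 x ≤ a·(x − l). (Soundness of the linear upper relaxation of ReLU in the zero-crossing case of Table 1.) -/
/-! The chord of ReLU through `(l, 0)` and `(u, u)` has slope `u / (u - l)` and lies above ReLU on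
`[l, u]` by convexity; raising the slope only raises the line on `x ≥ l`. -/

theorem max_zero_le_div_sub_mul_sub {l u x : ℝ} (hl : l ≤ 0) (hu : 0 ≤ u) (hlu : l < u)
    (hlx : l ≤ x) (hxu : x ≤ u) : max 0 x ≤ u / (u - l) * (x - l) := by
  have hul : 0 < u - l := sub_pos.2 hlu
  refine max_le (by positivity) ?_
  rw [div_mul_eq_mul_div, le_div_iff₀ hul]
  -- `u (x - l) - x (u - l) = l (x - u)`
  nlinarith [mul_nonneg_of_nonpos_of_nonpos hl (sub_nonpos.2 hxu)]

theorem relu_linear_upper_bound_general (l u a : ℝ) (hl : l < 0) (hu : 0 < u)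
    (ha : u / (u - l) ≤ a) :
    ∀ x : ℝ, l ≤ x → x ≤ u → max 0 x ≤ a * (x - l) := by
  intro x hlx hxu
  calc max 0 x ≤ u / (u - l) * (x - l) :=
        max_zero_le_div_sub_mul_sub hl.le hu.le (hl.trans hu) hlx hxu
    _ ≤ a * (x - l) := mul_le_mul_of_nonneg_right ha (sub_nonneg.2 hlx)

/-- Soundness of the linear upper relaxation of ReLU in the zero-crossing
case: if `l < 0 < u` and `u/(u−l) ≤ a ≤ 1`, then for every `x ∈ [l, u]`,
`ReLU(x) = max 0 x ≤ a·(x − l)`. -/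
theorem relu_linear_upper_bound (l u a : ℝ) (hl : l < 0) (hu : 0 < u)
    (ha : u / (u - l) ≤ a) (ha1 : a ≤ 1) :
    ∀ x : ℝ, l ≤ x → x ≤ u → max 0 x ≤ a * (x - l) :=
  relu_linear_upper_bound_general l u a hl hu ha
end
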